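/- arXiv:2310.06809 — 3 statements merged into one kernel-verified Lean document; each statement's English description precedes it below -/
import Mathlib

section
/- Let N ≥ 2 be an integer. Assume there are infinitely many primes p with p ∤ N such that p² does not divide N^{p−1} − 1. Then for every positive multiple M of N and every positive integer k, there exist r ≥ 1, positive integers k₁,…,k_r with k₁+⋯+k_r = k, and a function c from the units (ℤ/Mℤ)ˣ to Option((ℤ/Mℤ)^r), such that the set of primes p with p ∤ M, c(p mod M) = some (α₁,…,α_r), and Σ_{0 < m₁ < ⋯ < m_r < p, m_i ≡ α_i (mod M) for all i} 1/(m₁^{k₁}⋯m_r^{k_r}) nonzero in ZMod p, is infinite. -/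
/-!
For `0 < m < p` write `N m = p q_m + r_m` with `0 < r_m < p`. Since `m ↦ r_m` permutes `(0, p)`,
multiplying these identities modulo `p²` gives Lerch's formula `N^(p-1) ≡ 1 + p ∑ q_m / r_m`.
Grouping the sum by `q_m = i` turns it into `∑_{i<N} i ∑_{0<t<p, t ≡ -ip (N)} 1/t`, so if `p` does
not divide the Fermat quotient, some partial harmonic sum over a residue class modulo `N`, and
therefore one over a class `a` modulo `M`, is nonzero modulo `p`.

For a fixed class `a`, the harmonic (stuffle) product of a multiple harmonic sum of weight `n`
with the depth-one sum is a sum of multiple harmonic sums of weight `n + 1`. In the field `ZMod p`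
a nonzero product has a nonzero term, so every weight `k` carries an index whose sum, with all
`m_i ≡ a (mod M)`, is nonzero. Pigeonholing over the finitely many pairs (class, index) gives one
pair that works for infinitely many primes; the color map is constantly `a`.
-/

open Finset

open scoped Classical

section MultipleSum

variable {α : Type*} [LinearOrder α] {s : ℕ}

def increasingTuples (A : Finset α) (s : ℕ) : Finset (Fin s → α) :=
  {m ∈ Fintype.piFinset fun _ => A | StrictMono m}

lemma mem_increasingTuples {A : Finset α} {m : Fin s → α} :
    m ∈ increasingTuples A s ↔ (∀ i, m i ∈ A) ∧ StrictMono m := by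
  simp [increasingTuples]

/-- With `A = {t ∈ (0, p) | t ≡ a (mod M)}` and `x t = 1 / t` in `ZMod p`, this is the `p`-component
of the finite multiple zeta value of level `M` all of whose colors are `a`. -/
def multipleSum {R : Type*} [CommSemiring R] (A : Finset α) (x : α → R) (k : Fin s → ℕ) : R :=
  ∑ m ∈ increasingTuples A s, ∏ i, x (m i) ^ k i

def insertPos (m : Fin s → α) (t : α) : Fin (s + 1) :=
  ⟨#{j | m j < t}, Nat.lt_succ_of_le ((card_filter_le _ _).trans_eq (card_fin s))⟩

lemma castSucc_lt_insertPos_iff {m : Fin s → α} (hm : StrictMono m) (t : α) (j : Fin s) :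
    j.castSucc < insertPos m t ↔ m j < t := by
  change (j : ℕ) < #{j | m j < t} ↔ m j < t
  constructor
  · intro hj
    by_contra! h
    have : #{j' | m j' < t} ≤ #(Iio j) := card_le_card fun j' hj' =>
      mem_Iio.2 (hm.lt_iff_lt.1 ((mem_filter.1 hj').2.trans_le h))
    rw [Fin.card_Iio] at this
    omega
  · intro hj
    have : #(Iic j) ≤ #{j' | m j' < t} := card_le_card fun j' hj' =>
      mem_filter.2 ⟨mem_univ _, (hm.monotone (mem_Iic.1 hj')).trans_lt hj⟩
    rw [Fin.card_Iic] at this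
    omega

lemma strictMono_insertNth_insertPos {m : Fin s → α} (hm : StrictMono m) {t : α}
    (ht : ∀ j, m j ≠ t) : StrictMono ((insertPos m t).insertNth t m) := by
  intro a b hab
  rcases (insertPos m t).eq_self_or_eq_succAbove a with rfl | ⟨a, rfl⟩ <;>
    rcases (insertPos m t).eq_self_or_eq_succAbove b with rfl | ⟨b, rfl⟩
  · exact absurd hab (lt_irrefl _)
  · rw [Fin.lt_succAbove_iff_le_castSucc] at hab
    simp only [Fin.insertNth_apply_same, Fin.insertNth_apply_succAbove]
    exact (not_lt.1 fun h => hab.not_gt ((castSucc_lt_insertPos_iff hm t b).2 h)).lt_of_ne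
      (ht b).symm
  · rw [Fin.succAbove_lt_iff_castSucc_lt] at hab
    simpa only [Fin.insertNth_apply_same, Fin.insertNth_apply_succAbove] using
      (castSucc_lt_insertPos_iff hm t a).1 hab
  · simpa only [Fin.insertNth_apply_succAbove] using
      hm ((Fin.strictMono_succAbove _).lt_iff_lt.1 hab)

lemma insertPos_removeNth {w : Fin (s + 1) → α} (hw : StrictMono w) (i : Fin (s + 1)) :
    insertPos (i.removeNth w) (w i) = i := by
  ext
  have : ({j | w (i.succAbove j) < w i} : Finset (Fin s)) =
      ({j | (j : ℕ) < i} : Finset (Fin s)) := by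
    ext j
    rw [mem_filter, mem_filter, hw.lt_iff_lt, Fin.succAbove_lt_iff_castSucc_lt, Fin.lt_def,
      Fin.val_castSucc]
  change #({j | w (i.succAbove j) < w i} : Finset (Fin s)) = (i : ℕ)
  rw [this, Fin.card_filter_val_lt]
  omega

lemma sum_filter_forall_ne_eq_sum_removeNth {M : Type*} [AddCommMonoid M] (A : Finset α) (s : ℕ)
    (f : (Fin s → α) → α → M) :
    ∑ m ∈ increasingTuples A s, ∑ t ∈ A with ∀ j, m j ≠ t, f m t =
      ∑ i : Fin (s + 1), ∑ w ∈ increasingTuples A (s + 1), f (i.removeNth w) (w i) := by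
  rw [sum_sigma', ← sum_product']
  refine sum_nbij' (fun x => (insertPos x.1 x.2, (insertPos x.1 x.2).insertNth x.2 x.1))
    (fun y => ⟨y.1.removeNth y.2, y.2 y.1⟩) ?_ ?_ ?_ ?_ ?_
  · rintro ⟨m, t⟩ hx
    simp only [mem_sigma, mem_filter, mem_increasingTuples] at hx
    obtain ⟨⟨hmA, hm⟩, htA, ht⟩ := hx
    simp only [mem_product, mem_univ, true_and, mem_increasingTuples]
    refine ⟨fun j => ?_, strictMono_insertNth_insertPos hm ht⟩
    rcases (insertPos m t).eq_self_or_eq_succAbove j with rfl | ⟨j, rfl⟩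
    · simpa
    · simpa using hmA j
  · rintro ⟨i, w⟩ hy
    simp only [mem_product, mem_univ, true_and, mem_increasingTuples] at hy
    simp only [mem_sigma, mem_filter, mem_increasingTuples]
    exact ⟨⟨fun j => hy.1 _, hy.2.comp (Fin.strictMono_succAbove i)⟩, hy.1 i,
      fun j h => Fin.succAbove_ne i j (hy.2.injective h)⟩
  · rintro ⟨m, t⟩ -
    simp
  · rintro ⟨i, w⟩ hy
    simp only [mem_product, mem_univ, true_and, mem_increasingTuples] at hy
    simp [insertPos_removeNth hy.2]
  · rintro ⟨m, t⟩ -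
    simp

lemma sum_filter_exists_eq {M : Type*} [AddCommMonoid M] {A : Finset α} {m : Fin s → α}
    (hm : m ∈ increasingTuples A s) (f : α → M) :
    ∑ t ∈ A with ∃ j, m j = t, f t = ∑ j, f (m j) := by
  rw [mem_increasingTuples] at hm
  have : ({t ∈ A | ∃ j, m j = t} : Finset α) = univ.image m := by
    ext t
    simp only [mem_filter, mem_image, mem_univ, true_and]
    exact ⟨fun h => h.2, fun ⟨j, hj⟩ => ⟨hj ▸ hm.1 j, j, hj⟩⟩
  rw [this, sum_image fun a _ b _ h => hm.2.injective h]

variable {R : Type*} [CommSemiring R]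

lemma multipleSum_elim0 (A : Finset α) (x : α → R) : multipleSum A x Fin.elim0 = 1 := by
  simp [multipleSum, increasingTuples, Subsingleton.strictMono]

/-- The stuffle product with the depth-one index `(1)`. -/
theorem multipleSum_mul_sum (A : Finset α) (x : α → R) (k : Fin s → ℕ) :
    multipleSum A x k * ∑ t ∈ A, x t =
      ∑ i : Fin (s + 1), multipleSum A x (i.insertNth 1 k) +
        ∑ i : Fin s, multipleSum A x (k + Pi.single i 1 : Fin s → ℕ) := by
  have hsplit (m : Fin s → α) (hm : m ∈ increasingTuples A s) :
      ∑ t ∈ A, x t = ∑ j, x (m j) + ∑ t ∈ A with ∀ j, m j ≠ t, x t := by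
    rw [← sum_filter_exists_eq hm, ← sum_filter_add_sum_filter_not A (fun t => ∃ j, m j = t)]
    simp only [not_exists]
  have hinsert (i : Fin (s + 1)) (w : Fin (s + 1) → α) :
      ∏ j, x (w j) ^ (i.insertNth 1 k) j = (∏ j, x (i.removeNth w j) ^ k j) * x (w i) := by
    rw [Fin.prod_univ_succAbove _ i, mul_comm]
    simp [Fin.removeNth]
  have hbump (i : Fin s) (m : Fin s → α) :
      ∏ j, x (m j) ^ (k + Pi.single i 1 : Fin s → ℕ) j = (∏ j, x (m j) ^ k j) * x (m i) := by
    simp only [Pi.add_apply, pow_add, prod_mul_distrib]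
    congr 1
    rw [Fintype.prod_eq_single i fun j hj => by rw [Pi.single_eq_of_ne hj, pow_zero],
      Pi.single_eq_same, pow_one]
  calc multipleSum A x k * ∑ t ∈ A, x t
      = ∑ m ∈ increasingTuples A s, ∑ j, (∏ i, x (m i) ^ k i) * x (m j) +
          ∑ m ∈ increasingTuples A s, ∑ t ∈ A with ∀ j, m j ≠ t, (∏ i, x (m i) ^ k i) * x t := by
        rw [multipleSum, sum_mul, ← sum_add_distrib]
        refine sum_congr rfl fun m hm => ?_
        rw [hsplit m hm, mul_add, mul_sum, mul_sum]
    _ = _ := by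
        rw [sum_filter_forall_ne_eq_sum_removeNth, sum_comm, add_comm]
        simp only [multipleSum, hinsert, hbump]

lemma multipleSum_comp_cast (A : Finset α) (x : α → R) {s s' : ℕ} (h : s' = s) (k : Fin s → ℕ) :
    multipleSum A x (k ∘ Fin.cast h) = multipleSum A x k := by
  subst h
  rfl

theorem exists_multipleSum_ne_zero [NoZeroDivisors R] {A : Finset α} {x : α → R}
    (hx : ∑ t ∈ A, x t ≠ 0) (n : ℕ) :
    ∃ (s : ℕ) (k : Fin s → ℕ), (∀ i, 0 < k i) ∧ ∑ i, k i = n ∧ multipleSum A x k ≠ 0 := by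
  induction n with
  | zero =>
    have : Nontrivial R := ⟨⟨_, _, hx⟩⟩
    exact ⟨0, Fin.elim0, fun i => i.elim0, rfl, by simp [multipleSum_elim0]⟩
  | succ n ih =>
    obtain ⟨s, k, hpos, hsum, hne⟩ := ih
    have hprod := mul_ne_zero hne hx
    rw [multipleSum_mul_sum] at hprod
    by_cases hins : ∑ i : Fin (s + 1), multipleSum A x (i.insertNth 1 k) = 0
    · rw [hins, zero_add] at hprod
      obtain ⟨i, -, hi⟩ := exists_ne_zero_of_sum_ne_zero hprod
      refine ⟨s, k + Pi.single i 1, fun j => (hpos j).trans_le (Nat.le_add_right _ _), ?_, hi⟩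
      simp [sum_add_distrib, hsum]
    · obtain ⟨i, -, hi⟩ := exists_ne_zero_of_sum_ne_zero hins
      refine ⟨s + 1, i.insertNth 1 k, fun j => ?_, ?_, hi⟩
      · rcases i.eq_self_or_eq_succAbove j with rfl | ⟨j, rfl⟩
        · simp
        · simpa using hpos j
      · rw [Fin.sum_univ_succAbove _ i]
        simp [hsum, add_comm]

def Composition.ofFn {n s : ℕ} (k : Fin s → ℕ) (hpos : ∀ i, 0 < k i) (hsum : ∑ i, k i = n) :
    Composition n where
  blocks := List.ofFn k
  blocks_pos := by simpa [List.mem_ofFn] using fun i => hpos i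
  blocks_sum := by rw [List.sum_ofFn, hsum]

theorem exists_composition_multipleSum_ne_zero [NoZeroDivisors R] {A : Finset α} {x : α → R}
    (hx : ∑ t ∈ A, x t ≠ 0) (n : ℕ) : ∃ c : Composition n, multipleSum A x c.blocksFun ≠ 0 := by
  obtain ⟨s, k, hpos, hsum, hne⟩ := exists_multipleSum_ne_zero hx n
  refine ⟨Composition.ofFn k hpos hsum, ?_⟩
  have hlen : (Composition.ofFn k hpos hsum).length = s := List.length_ofFn
  have hblocks : (Composition.ofFn k hpos hsum).blocksFun = k ∘ Fin.cast hlen := by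
    funext i
    exact List.get_ofFn ..
  rw [hblocks]
  exact (multipleSum_comp_cast A x hlen k).trans_ne hne

end MultipleSum

section FermatQuotient

variable {p N : ℕ}

lemma mul_mod_mem_Ioo (hp : p.Prime) (hpN : ¬ p ∣ N) {m : ℕ} (hm : m ∈ Ioo 0 p) :
    N * m % p ∈ Ioo 0 p := by
  rw [mem_Ioo] at hm ⊢
  refine ⟨Nat.pos_of_ne_zero fun h => ?_, Nat.mod_lt _ hp.pos⟩
  rcases (Nat.Prime.dvd_mul hp).1 (Nat.dvd_of_mod_eq_zero h) with h | h
  · exact hpN h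
  · exact Nat.not_dvd_of_pos_of_lt hm.1 hm.2 h

lemma prod_mul_mod_eq_prod {M : Type*} [CommMonoid M] (hp : p.Prime) (hpN : ¬ p ∣ N)
    (f : ℕ → M) : ∏ m ∈ Ioo 0 p, f (N * m % p) = ∏ m ∈ Ioo 0 p, f m := by
  have hinj : Set.InjOn (fun m => N * m % p) (Ioo 0 p : Finset ℕ) := by
    intro a ha b hb hab
    rw [mem_coe, mem_Ioo] at ha hb
    exact Nat.ModEq.eq_of_lt_of_lt
      (Nat.ModEq.cancel_left_of_coprime ((Nat.Prime.coprime_iff_not_dvd hp).2 hpN) hab) ha.2 hb.2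
  have hmaps : Set.MapsTo (fun m => N * m % p) (Ioo 0 p : Finset ℕ) (Ioo 0 p : Finset ℕ) :=
    fun m hm => mul_mod_mem_Ioo hp hpN hm
  exact prod_nbij _ hmaps hinj (surjOn_of_injOn_of_card_le _ hmaps hinj le_rfl) fun _ _ => rfl

lemma prod_one_add_mul_of_mul_self_eq_zero {ι R : Type*} [CommSemiring R] {ε : R}
    (hε : ε * ε = 0) (s : Finset ι) (y : ι → R) :
    ∏ i ∈ s, (1 + ε * y i) = 1 + ε * ∑ i ∈ s, y i := by
  induction s using Finset.cons_induction with
  | empty => simp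
  | cons i s hi ih =>
    rw [prod_cons, ih, sum_cons]
    calc (1 + ε * y i) * (1 + ε * ∑ j ∈ s, y j)
        = 1 + ε * (y i + ∑ j ∈ s, y j) + ε * ε * (y i * ∑ j ∈ s, y j) := by ring
      _ = 1 + ε * (y i + ∑ j ∈ s, y j) := by rw [hε, zero_mul, add_zero]

lemma natCast_mul_inv_eq_one (hp : p.Prime) {t : ℕ} (ht : t ∈ Ioo 0 p) :
    (t : ZMod (p ^ 2)) * (t : ZMod (p ^ 2))⁻¹ = 1 := by
  rw [mem_Ioo] at ht
  exact ZMod.coe_mul_inv_eq_one t <| Nat.Coprime.pow_right 2 <| Nat.coprime_comm.1 <|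
    (Nat.Prime.coprime_iff_not_dvd hp).2 (Nat.not_dvd_of_pos_of_lt ht.1 ht.2)

lemma natCast_eq_mul_one_add {n : ℕ} (hp : p.Prime) (hn : n % p ∈ Ioo 0 p) :
    (n : ZMod (p ^ 2)) =
      (n % p : ℕ) * (1 + p * ((n / p : ℕ) * ((n % p : ℕ) : ZMod (p ^ 2))⁻¹)) := by
  have hdiv : (n : ZMod (p ^ 2)) = p * (n / p : ℕ) + (n % p : ℕ) := by
    rw [← Nat.cast_mul, ← Nat.cast_add, Nat.div_add_mod]
  linear_combination hdiv - (p * (n / p : ℕ) : ZMod (p ^ 2)) * natCast_mul_inv_eq_one hp hn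

/-- Lerch's formula: the sum is the Fermat quotient `q_p(N)` modulo `p`. -/
theorem natCast_pow_sub_one_eq (hp : p.Prime) (hpN : ¬ p ∣ N) :
    (N : ZMod (p ^ 2)) ^ (p - 1) = 1 + p * ∑ m ∈ Ioo 0 p,
      ((N * m / p : ℕ) : ZMod (p ^ 2)) * ((N * m % p : ℕ) : ZMod (p ^ 2))⁻¹ := by
  have hε : (p : ZMod (p ^ 2)) * p = 0 := by
    rw [← Nat.cast_mul, ← sq, ZMod.natCast_self]
  have hunit : IsUnit (∏ m ∈ Ioo 0 p, (m : ZMod (p ^ 2))) :=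
    IsUnit.prod_iff.2 fun m hm => IsUnit.of_mul_eq_one _ (natCast_mul_inv_eq_one hp hm)
  refine hunit.mul_right_cancel ?_
  calc (N : ZMod (p ^ 2)) ^ (p - 1) * ∏ m ∈ Ioo 0 p, (m : ZMod (p ^ 2))
      = ∏ m ∈ Ioo 0 p, ((N * m : ℕ) : ZMod (p ^ 2)) := by
        simp [prod_mul_distrib]
    _ = _ := by
        rw [prod_congr rfl fun m hm => natCast_eq_mul_one_add hp (mul_mod_mem_Ioo hp hpN hm),
          prod_mul_distrib, prod_one_add_mul_of_mul_self_eq_zero hε,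
          prod_mul_mod_eq_prod hp hpN (fun m => (m : ZMod (p ^ 2))), mul_comm]

lemma natCast_mul_eq_zero_of_castHom_eq_zero [NeZero p] {y : ZMod (p ^ 2)}
    (hy : ZMod.castHom (dvd_pow_self p two_ne_zero) (ZMod p) y = 0) :
    (p : ZMod (p ^ 2)) * y = 0 := by
  rw [← ZMod.natCast_zmod_val y, map_natCast, ZMod.natCast_eq_zero_iff] at hy
  obtain ⟨c, hc⟩ := hy
  rw [← ZMod.natCast_zmod_val y, hc, ← Nat.cast_mul, ← mul_assoc, ← sq, Nat.cast_mul,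
    ZMod.natCast_self, zero_mul]

theorem sq_dvd_pow_sub_one_of_sum_eq_zero (hp : p.Prime) (hpN : ¬ p ∣ N)
    (h : ∑ m ∈ Ioo 0 p, ((N * m / p : ℕ) : ZMod p) * ((N * m % p : ℕ) : ZMod p)⁻¹ = 0) :
    p ^ 2 ∣ N ^ (p - 1) - 1 := by
  have := Fact.mk hp
  set π := ZMod.castHom (dvd_pow_self p two_ne_zero) (ZMod p)
  have hcast {t : ℕ} (ht : t ∈ Ioo 0 p) : π (t : ZMod (p ^ 2))⁻¹ = (t : ZMod p)⁻¹ := by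
    refine eq_inv_of_mul_eq_one_left ?_
    rw [← map_natCast π, ← map_mul, mul_comm, natCast_mul_inv_eq_one hp ht, map_one]
  have hmod : N ^ (p - 1) ≡ 1 [MOD p ^ 2] := by
    rw [← ZMod.natCast_eq_natCast_iff, Nat.cast_pow, natCast_pow_sub_one_eq hp hpN,
      natCast_mul_eq_zero_of_castHom_eq_zero, add_zero, Nat.cast_one]
    rw [map_sum, ← h]
    refine sum_congr rfl fun m hm => ?_
    rw [map_mul, map_natCast, hcast (mul_mod_mem_Ioo hp hpN hm)]
  have hN : 0 < N := Nat.pos_of_ne_zero fun h => hpN (h ▸ dvd_zero p)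
  exact (Nat.modEq_iff_dvd' (Nat.one_le_pow _ _ hN)).1 hmod.symm

lemma sum_div_mod_eq_sum_sum {M : Type*} [AddCommMonoid M] (hp : p.Prime) (hpN : ¬ p ∣ N)
    (f : ℕ → ℕ → M) :
    ∑ m ∈ Ioo 0 p, f (N * m / p) (N * m % p) =
      ∑ i ∈ range N, ∑ t ∈ Ioo 0 p with N ∣ i * p + t, f i t := by
  have hN : 0 < N := Nat.pos_of_ne_zero fun h => hpN (h ▸ dvd_zero p)
  rw [sum_sigma']
  refine sum_nbij' (fun m => ⟨N * m / p, N * m % p⟩) (fun x => (x.1 * p + x.2) / N) ?_ ?_ ?_ ?_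
    fun _ _ => rfl
  · intro m hm
    have hm' := mem_Ioo.1 hm
    simp only [mem_sigma, mem_range, mem_filter, Nat.div_add_mod', dvd_mul_right, and_true]
    refine ⟨(Nat.div_lt_iff_lt_mul hp.pos).2 ?_, mul_mod_mem_Ioo hp hpN hm⟩
    exact Nat.mul_lt_mul_of_pos_left hm'.2 hN
  · rintro ⟨i, t⟩ hx
    simp only [mem_sigma, mem_range, mem_filter, mem_Ioo] at hx ⊢
    obtain ⟨hi, ⟨ht0, htp⟩, hdvd⟩ := hx
    refine ⟨Nat.div_pos (Nat.le_of_dvd (by positivity) hdvd) hN, (Nat.div_lt_iff_lt_mul hN).2 ?_⟩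
    nlinarith
  · intro m hm
    simp only [Nat.div_add_mod', Nat.mul_div_cancel_left _ hN]
  · rintro ⟨i, t⟩ hx
    simp only [mem_sigma, mem_range, mem_filter, mem_Ioo] at hx
    obtain ⟨hi, ⟨ht0, htp⟩, hdvd⟩ := hx
    rw [Nat.mul_div_cancel' hdvd, Sigma.mk.inj_iff, add_comm, Nat.add_mul_div_right _ _ hp.pos,
      Nat.div_eq_of_lt htp, zero_add, Nat.add_mul_mod_self_right, Nat.mod_eq_of_lt htp]
    exact ⟨rfl, HEq.rfl⟩

theorem exists_sum_inv_ne_zero_of_not_sq_dvd (hp : p.Prime) (hpN : ¬ p ∣ N)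
    (h : ¬ p ^ 2 ∣ N ^ (p - 1) - 1) :
    ∃ b : ZMod N, ∑ t ∈ Ioo 0 p with ((t : ℕ) : ZMod N) = b, (t : ZMod p)⁻¹ ≠ 0 := by
  by_contra! H
  refine h (sq_dvd_pow_sub_one_of_sum_eq_zero hp hpN ?_)
  rw [sum_div_mod_eq_sum_sum hp hpN fun i t => (i : ZMod p) * (t : ZMod p)⁻¹]
  refine sum_eq_zero fun i _ => ?_
  have hclass : ∑ t ∈ Ioo 0 p with N ∣ i * p + t, (t : ZMod p)⁻¹ = 0 := by
    rw [← H (-((i * p : ℕ) : ZMod N))]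
    refine sum_congr (filter_congr fun t _ => ?_) fun _ _ => rfl
    rw [← ZMod.natCast_eq_zero_iff, Nat.cast_add, eq_neg_iff_add_eq_zero, add_comm]
  rw [← mul_sum, hclass, mul_zero]

end FermatQuotient

theorem Set.Infinite.exists_infinite_sep {β γ : Type*} [Finite γ] {S : Set β} (hS : S.Infinite)
    {P : β → γ → Prop} (h : ∀ b ∈ S, ∃ c, P b c) : ∃ c, {b ∈ S | P b c}.Infinite := by
  by_contra! hfin
  exact hS ((Set.finite_iUnion hfin).subset fun b hb =>
    Set.mem_iUnion.2 ((h b hb).imp fun _ hc => ⟨hb, hc⟩))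

lemma exists_sum_filter_natCast_eq_ne_zero_of_dvd {M N : ℕ} [NeZero M] (hNM : N ∣ M)
    {β : Type*} [AddCommMonoid β] {A : Finset ℕ} {f : ℕ → β} {b : ZMod N}
    (h : ∑ t ∈ A with ((t : ℕ) : ZMod N) = b, f t ≠ 0) :
    ∃ a : ZMod M, ∑ t ∈ A with ((t : ℕ) : ZMod M) = a, f t ≠ 0 := by
  by_contra! H
  refine h ?_
  rw [← sum_fiberwise_of_maps_to (g := fun t : ℕ => (t : ZMod M))
    (t := {a | ZMod.castHom hNM (ZMod N) a = b}) fun t ht => ?_]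
  · refine sum_eq_zero fun a ha => ?_
    rw [mem_filter] at ha
    rw [← H a, filter_filter]
    refine sum_congr (filter_congr fun t _ => ?_) fun _ _ => rfl
    exact ⟨And.right, fun ht => ⟨by rw [← ha.2, ← ht, map_natCast], ht⟩⟩
  · rw [mem_filter] at ht ⊢
    exact ⟨mem_univ _, by rw [map_natCast, ht.2]⟩

lemma sum_filter_strictMono_eq_multipleSum {M p r : ℕ} [Fact p.Prime] (a : ZMod M)
    (k : Fin r → ℕ) :
    ∑ m ∈ (Fintype.piFinset fun _ : Fin r => Ioo 0 p).filter
        (fun m : Fin r → ℕ => StrictMono m ∧ ∀ i, (m i : ZMod M) = a),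
      ∏ i, ((m i : ZMod p) ^ k i)⁻¹ =
    multipleSum {t ∈ Ioo 0 p | ((t : ℕ) : ZMod M) = a} (fun t : ℕ => (t : ZMod p)⁻¹) k := by
  rw [multipleSum]
  refine sum_congr ?_ fun m _ => prod_congr rfl fun i _ => (inv_pow _ _).symm
  ext m
  simp only [mem_filter, Fintype.mem_piFinset, mem_increasingTuples, forall_and]
  tauto

theorem nonzero_fmzv_level_of_infinitely_many_nondiv_fermat_quotient_general
    (N : ℕ)
    (hq : {p : ℕ | p.Prime ∧ ¬ p ∣ N ∧ ¬ (p ^ 2 ∣ N ^ (p - 1) - 1)}.Infinite) :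
    ∀ M : ℕ, 0 < M → N ∣ M → ∀ k : ℕ, 0 < k →
      ∃ r : ℕ, 0 < r ∧ ∃ ks : Fin r → ℕ, (∀ i, 0 < ks i) ∧ (∑ i, ks i) = k ∧
        ∃ c : (ZMod M)ˣ → Option (Fin r → ZMod M),
          {p : ℕ | p.Prime ∧ ¬ p ∣ M ∧
            ∃ (u : (ZMod M)ˣ) (α : Fin r → ZMod M), (u : ZMod M) = (p : ZMod M) ∧
              c u = some α ∧
              (∑ m ∈ (Fintype.piFinset fun _ : Fin r => Finset.Ioo 0 p).filter
                  (fun m : Fin r → ℕ => StrictMono m ∧ ∀ i, ((m i : ZMod M) = α i)),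
                ∏ i, ((m i : ZMod p) ^ ks i)⁻¹) ≠ 0}.Infinite := by
  intro M hM hNM k hk
  have : NeZero M := ⟨hM.ne'⟩
  have hgood : ∀ p ∈ {p : ℕ | p.Prime ∧ ¬ p ∣ N ∧ ¬ (p ^ 2 ∣ N ^ (p - 1) - 1)} \ {p | p ∣ M},
      ∃ x : ZMod M × Composition k, multipleSum {t ∈ Ioo 0 p | ((t : ℕ) : ZMod M) = x.1}
        (fun t : ℕ => (t : ZMod p)⁻¹) x.2.blocksFun ≠ 0 := by
    rintro p ⟨⟨hp, hpN, hsq⟩, -⟩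
    have := Fact.mk hp
    obtain ⟨b, hb⟩ := exists_sum_inv_ne_zero_of_not_sq_dvd hp hpN hsq
    obtain ⟨a, ha⟩ := exists_sum_filter_natCast_eq_ne_zero_of_dvd hNM hb
    obtain ⟨c, hc⟩ := exists_composition_multipleSum_ne_zero ha k
    exact ⟨(a, c), hc⟩
  have hfin : {p : ℕ | p ∣ M}.Finite := (Set.finite_le_nat M).subset fun p => Nat.le_of_dvd hM
  obtain ⟨⟨a, c⟩, hinf⟩ := (hq.sdiff hfin).exists_infinite_sep hgood
  refine ⟨c.length, c.length_pos_of_pos hk, c.blocksFun, c.one_le_blocksFun, c.sum_blocksFun,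
    fun _ => some fun _ => a, hinf.mono ?_⟩
  rintro p ⟨⟨⟨hp, -⟩, hpM⟩, hne⟩
  have := Fact.mk hp
  have hcop : p.Coprime M := (Nat.Prime.coprime_iff_not_dvd hp).2 hpM
  exact ⟨hp, hpM, ZMod.unitOfCoprime p hcop, fun _ => a, ZMod.coe_unitOfCoprime p hcop, rfl,
    by rwa [sum_filter_strictMono_eq_multipleSum]⟩

/-- **Proposition 4.4.** Let `N ≥ 2` and suppose there are infinitely many primes `p ∤ N` with
`p² ∤ N^{p-1} - 1` (i.e. `p` does not divide the Fermat quotient `q_p(N)`).  Then for every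
positive multiple `M` of `N` and every positive integer `k` there are an index `(k₁,…,k_r)`,
`r ≥ 1`, of weight `k` and a color map `c : (ℤ/Mℤ)ˣ → Option ((ℤ/Mℤ)^r)` such that for
infinitely many primes `p ∤ M` the `p`-component of the corresponding finite multiple zeta
value of level `M`, namely `Σ_{0<m₁<⋯<m_r<p, m_i ≡ α_i (mod M)} 1/(m₁^{k₁}⋯m_r^{k_r})` where
`c(p mod M) = some α`, is nonzero in `ZMod p`. -/
theorem nonzero_fmzv_level_of_infinitely_many_nondiv_fermat_quotient
    (N : ℕ) (hN : 2 ≤ N)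
    (hq : {p : ℕ | p.Prime ∧ ¬ p ∣ N ∧ ¬ (p ^ 2 ∣ N ^ (p - 1) - 1)}.Infinite) :
    ∀ M : ℕ, 0 < M → N ∣ M → ∀ k : ℕ, 0 < k →
      ∃ r : ℕ, 0 < r ∧ ∃ ks : Fin r → ℕ, (∀ i, 0 < ks i) ∧ (∑ i, ks i) = k ∧
        ∃ c : (ZMod M)ˣ → Option (Fin r → ZMod M),
          {p : ℕ | p.Prime ∧ ¬ p ∣ M ∧
            ∃ (u : (ZMod M)ˣ) (α : Fin r → ZMod M), (u : ZMod M) = (p : ZMod M) ∧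
              c u = some α ∧
              (∑ m ∈ (Fintype.piFinset fun _ : Fin r => Finset.Ioo 0 p).filter
                  (fun m : Fin r → ℕ => StrictMono m ∧ ∀ i, ((m i : ZMod M) = α i)),
                ∏ i, ((m i : ZMod p) ^ ks i)⁻¹) ≠ 0}.Infinite :=
  nonzero_fmzv_level_of_infinitely_many_nondiv_fermat_quotient_general N hq
end

section
/- Let p be an odd prime. Then in ZMod p one has 2 · q_p(2) ≡ − Σ_{0 < m < p/2} 1/m, where q_p(2) = (2^{p−1} − 1)/p ∈ ℤ and the sum of reciprocals of the integers m with 0 < m < p/2 is a rational number with denominator coprime to p viewed in ZMod p. -/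
open Finset

/-! Summing binomial coefficients, `2 (2^{p-1} - 1) = ∑_{0<k<p} C(p,k)`, and each `C(p,k)/p`
is `(-1)^{k-1}/k` mod `p`, because `k · C(p,k)/p = C(p-1,k-1) ≡ (-1)^{k-1}`. The alternating
harmonic sum `∑ (-1)^{k-1}/k` is the full sum `∑ 1/k`, which vanishes since `k ↦ p - k` pairs
`1/k` with `-1/k`, minus twice its even part `∑_{2m<p} 1/(2m)`. -/

theorem Nat.sum_Ioo_choose (n : ℕ) : ∑ k ∈ Ioo 0 n, n.choose k = 2 ^ n - 2 := by
  rcases n.eq_zero_or_pos with rfl | hn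
  · simp
  have h := Nat.sum_range_choose n
  rw [range_succ_eq_Icc_zero, ← Ioc_insert_left hn.le, ← Ioo_insert_right hn,
    sum_insert (by simp; omega), sum_insert (by simp)] at h
  simp only [Nat.choose_zero_right, Nat.choose_self] at h
  omega

theorem Finset.sum_filter_even_Ioo {M : Type*} [AddCommMonoid M] (n : ℕ) (f : ℕ → M) :
    ∑ k ∈ (Ioo 0 n).filter Even, f k = ∑ m ∈ (Ioo 0 n).filter (2 * · < n), f (2 * m) := by
  refine (sum_nbij' (2 * ·) (· / 2) ?_ ?_ ?_ ?_ ?_).symm <;>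
    simp +contextual [Nat.even_iff] <;> omega

theorem Finset.sum_Ioo_neg_one_pow_pred_mul {R : Type*} [CommRing R] (n : ℕ) (f : ℕ → R) :
    ∑ k ∈ Ioo 0 n, (-1) ^ (k - 1) * f k
      = ∑ k ∈ Ioo 0 n, f k - 2 * ∑ k ∈ (Ioo 0 n).filter Even, f k := by
  have hterm (k) (hk : k ∈ Ioo 0 n) :
      (-1) ^ (k - 1) * f k = f k - 2 * if Even k then f k else 0 := by
    rcases Nat.even_or_odd k with h | h
    · rw [(Nat.Even.sub_odd (mem_Ioo.mp hk).1 h odd_one).neg_one_pow, if_pos h]; ring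
    · rw [(Nat.Odd.sub_odd h odd_one).neg_one_pow, if_neg (Nat.not_even_iff_odd.mpr h)]; ring
  rw [sum_congr rfl hterm, sum_sub_distrib, ← mul_sum, sum_filter]

namespace ZMod

variable {p : ℕ} [hp : Fact p.Prime]

theorem natCast_choose_pred {j : ℕ} (hj : j < p) :
    (((p - 1).choose j : ℕ) : ZMod p) = (-1) ^ j := by
  induction j with
  | zero => simp
  | succ j ih =>
    have hpascal : (p - 1).choose j + (p - 1).choose (j + 1) = p.choose (j + 1) := by
      rw [← Nat.choose_succ_succ', Nat.sub_add_cancel hp.out.one_le]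
    have hvanish : ((p.choose (j + 1) : ℕ) : ZMod p) = 0 :=
      (natCast_eq_zero_iff _ _).mpr (hp.out.dvd_choose_self j.succ_ne_zero hj)
    rw [← hpascal, Nat.cast_add, ih (by omega)] at hvanish
    rw [pow_succ]
    linear_combination hvanish

theorem natCast_choose_div_self {k : ℕ} (hk : k ∈ Ioo 0 p) :
    ((p.choose k / p : ℕ) : ZMod p) = (-1) ^ (k - 1) * (k : ZMod p)⁻¹ := by
  rw [mem_Ioo] at hk
  have hkey : k * (p.choose k / p) = (p - 1).choose (k - 1) := by
    have h := Nat.add_one_mul_choose_eq (p - 1) (k - 1)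
    rw [Nat.sub_add_cancel hp.out.one_le, Nat.sub_add_cancel hk.1] at h
    rw [← Nat.mul_div_assoc _ (hp.out.dvd_choose_self hk.1.ne' hk.2), mul_comm k, ← h,
      Nat.mul_div_cancel_left _ hp.out.pos]
  have hk0 : (k : ZMod p) ≠ 0 := by
    rw [Ne, natCast_eq_zero_iff]
    exact fun h => absurd (Nat.le_of_dvd hk.1 h) (by omega)
  rw [← natCast_choose_pred (j := k - 1) (by omega), ← hkey, Nat.cast_mul,
    mul_comm (k : ZMod p), mul_inv_cancel_right₀ hk0]

theorem sum_Ioo_inv_eq_zero (hodd : Odd p) : ∑ k ∈ Ioo 0 p, (k : ZMod p)⁻¹ = 0 := by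
  refine sum_involution (fun k _ => p - k) (fun k hk => ?_) (fun k hk _ => ?_)
    (fun k hk => ?_) (fun k hk => ?_) <;> rw [mem_Ioo] at hk
  · rw [Nat.cast_sub hk.2.le, natCast_self, zero_sub, inv_neg, add_neg_cancel]
  · obtain ⟨m, rfl⟩ := hodd
    omega
  · rw [mem_Ioo]; omega
  · omega

end ZMod

theorem Nat.Prime.two_mul_pow_pred_sub_one_div_eq_sum_choose_div {p : ℕ} (hp : p.Prime)
    (hodd : Odd p) :
    2 * ((2 ^ (p - 1) - 1) / p) = ∑ k ∈ Ioo 0 p, p.choose k / p := by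
  have hferm : p ∣ 2 ^ (p - 1) - 1 :=
    Nat.dvd_of_mod_eq_zero (Nat.pow_card_sub_one_sub_one_mod_card hp hodd.coprime_two_left)
  rw [← Nat.mul_div_assoc _ hferm, ← Nat.sum_div fun k hk => hp.dvd_choose_self
    (mem_Ioo.mp hk).1.ne' (mem_Ioo.mp hk).2, Nat.sum_Ioo_choose, Nat.mul_sub_one,
    mul_pow_sub_one hp.ne_zero]

/-- **Eisenstein's congruence (1850).** For an odd prime `p`,
`2·q_p(2) ≡ - Σ_{0 < m < p/2} 1/m (mod p)`, where `q_p(2) = (2^{p-1}-1)/p` is the Fermat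
quotient with base `2`. -/
theorem eisenstein (p : ℕ) (hp : p.Prime) (hodd : Odd p) :
    2 * (((2 ^ (p - 1) - 1) / p : ℕ) : ZMod p)
    = - ∑ m ∈ (Finset.Ioo 0 p).filter (fun m : ℕ => 2 * m < p), ((m : ZMod p))⁻¹ := by
  have := Fact.mk hp
  have h2 : (2 : ZMod p) ≠ 0 := by
    exact_mod_cast (ZMod.unitOfCoprime 2 hodd.coprime_two_left).ne_zero
  rw [← Nat.cast_ofNat, ← Nat.cast_mul, hp.two_mul_pow_pred_sub_one_div_eq_sum_choose_div hodd,
    Nat.cast_sum, sum_congr rfl fun _ => ZMod.natCast_choose_div_self,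
    sum_Ioo_neg_one_pow_pred_mul, ZMod.sum_Ioo_inv_eq_zero hodd, sum_filter_even_Ioo]
  simp only [Nat.cast_mul, Nat.cast_ofNat, mul_inv, ← mul_sum, mul_inv_cancel_left₀ h2,
    zero_sub]
end

section
/- Let N be a positive integer and p an odd prime not dividing 2N. Then in ZMod p one has q_p(2) ≡ −(2N/(N+1)) · Σ_{0 ≤ j < N/2} Σ_{0 < m < p, m ≡ −2jp (mod 2N)} 1/m, where q_p(2) = (2^{p−1} − 1)/p ∈ ℤ, the outer sum is over integers j with 0 ≤ j < N/2, the rational number 2N/(N+1) is viewed in ZMod p (its denominator N+1 may be assumed coprime to p by excluding the finitely many primes dividing N+1; equivalently, state the identity multiplied through as (N+1)·q_p(2) ≡ −2N · Σ_{0 ≤ j < N/2} Σ_{0 < m < p, m ≡ −2jp (mod 2N)} 1/m), and the inner sums of reciprocals are rational numbers with denominator coprime to p viewed in ZMod p. -/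
/-!
Write `m = 2Nk - 2jp`: the condition `m ≡ -2jp (mod 2N)` with `0 < m < p` says exactly that
`Nk = jp + m/2` with `0 < m/2 < p/2`, so `1/m = (2N)⁻¹ · 1/k` in `ZMod p`, and summing over
`0 ≤ j < N/2` collects all `k < p/2` with `Nk mod p < p/2`. Multiplication by `N` permutes the
nonzero residues and `x ↦ -x` swaps the halves `(0, p/2)` and `(p/2, p)`, which gives the
Lerch-type identity `2 Σ_{k < p/2, Nk mod p < p/2} 1/k = (N + 1) Σ_{k < p/2} 1/k`. Finally
`Σ_{k < p/2} 1/k = -2 q_p(2)`: the binomial theorem gives `2 q_p(2) = Σ_{0<k<p} C(p,k)/p`,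
`C(p,k)/p ≡ (-1)^(k-1)/k`, and `Σ_{0<k<p} 1/k = 0`.
-/

open Finset

open scoped Classical

def fermatQuotient (p a : ℕ) : ℕ := (a ^ (p - 1) - 1) / p

theorem FiniteField.sum_inv_eq_zero {K : Type*} [Field K] [Fintype K] (h2 : (2 : K) ≠ 0) :
    ∑ x : K, x⁻¹ = 0 := by
  have h : ∑ x : K, x⁻¹ = -∑ x : K, x⁻¹ := by
    rw [← sum_neg_distrib]
    exact Fintype.sum_equiv (Equiv.neg K) _ _ fun x => by simp
  have h' : (2 : K) * ∑ x : K, x⁻¹ = 0 := by linear_combination h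
  exact (mul_eq_zero.1 h').resolve_left h2

theorem Nat.two_mul_lt_iff_two_mul_div_lt {N k p : ℕ} (hN : 0 < N) (h : 2 * (N * k % p) < p) :
    2 * k < p ↔ 2 * (N * k / p) < N := by
  have := Nat.div_add_mod (N * k) p
  constructor
  · intro hk
    have h1 : N * (2 * k + 1) ≤ N * p := Nat.mul_le_mul_left N hk
    by_contra! h2
    have h3 := Nat.mul_le_mul_left p h2
    linarith [Nat.zero_le (N * k % p)]
  · intro hd
    have h1 : p * (2 * (N * k / p) + 1) ≤ p * N := Nat.mul_le_mul_left p hd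
    exact Nat.lt_of_mul_lt_mul_left (a := N) (by linarith)

theorem Nat.mul_div_eq_and_two_mul_mul_mod_eq {N k m j p : ℕ} (hm : m < p)
    (h : 2 * N * k = m + 2 * j * p) : N * k / p = j ∧ 2 * (N * k % p) = m := by
  have h' : m + 2 * (p * j) = 2 * (N * k) := by linarith
  obtain ⟨hq, hr⟩ := (Nat.div_mod_unique (by omega : 0 < p)).2
    (⟨by omega, by omega⟩ : m / 2 + p * j = N * k ∧ m / 2 < p)
  exact ⟨hq, by omega⟩

namespace ZMod

variable {p : ℕ}

theorem sum_Ioo_natCast {M : Type*} [AddCommMonoid M] [NeZero p] (f : ZMod p → M)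
    (hf : f 0 = 0) : ∑ k ∈ Ioo 0 p, f k = ∑ x, f x := by
  refine (sum_nbij' (t := univ.filter (· ≠ 0)) (fun k : ℕ => (k : ZMod p)) val
    (fun k hk => ?_) (fun x hx => ?_) (fun k hk => ?_) (fun x _ => natCast_zmod_val x)
    (fun _ _ => rfl)).trans (sum_filter_of_ne fun x _ hfx hx => hfx (by rw [hx]; exact hf))
  · obtain ⟨hk0, hkp⟩ := mem_Ioo.1 hk
    simpa [← val_pos, val_cast_of_lt hkp] using hk0
  · exact mem_Ioo.2 ⟨val_pos.2 (mem_filter.1 hx).2, val_lt x⟩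
  · exact val_cast_of_lt (mem_Ioo.1 hk).2

theorem sum_Ioo_filter_natCast_inv [NeZero p] (P : ZMod p → Prop) [DecidablePred P] :
    ∑ k ∈ Ioo 0 p with P ((k : ℕ) : ZMod p), (k : ZMod p)⁻¹ = ∑ x with P x, x⁻¹ := by
  rw [sum_filter, sum_filter]
  exact sum_Ioo_natCast (fun x => if P x then x⁻¹ else 0) (by simp only [inv_zero, ite_self])

theorem two_mul_val_neg_lt_iff [NeZero p] (hodd : Odd p) {x : ZMod p} (hx : x ≠ 0) :
    2 * (-x).val < p ↔ ¬ 2 * x.val < p := by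
  have := x.val_lt
  have := Nat.odd_iff.1 hodd
  rw [neg_val, if_neg hx]
  omega

variable [Fact p.Prime]

theorem two_ne_zero_of_odd (hodd : Odd p) : (2 : ZMod p) ≠ 0 :=
  Ring.two_ne_zero <| by rw [ringChar_zmod_n]; rintro rfl; exact absurd hodd (by decide)

theorem two_mul_sum_filter_val_mul_inv (hodd : Odd p) {a : ZMod p} (ha : a ≠ 0) :
    2 * ∑ x with 2 * x.val < p ∧ 2 * (a * x).val < p, x⁻¹
      = (a + 1) * ∑ x with 2 * x.val < p, x⁻¹ := by
  have hsplit_mul : ∑ x with 2 * (a * x).val < p, x⁻¹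
      = ∑ x with 2 * x.val < p ∧ 2 * (a * x).val < p, x⁻¹
        + ∑ x with ¬ 2 * x.val < p ∧ 2 * (a * x).val < p, x⁻¹ := by
    rw [← sum_filter_add_sum_filter_not _ (fun x => 2 * x.val < p), filter_filter, filter_filter]
    simp only [and_comm]
  have hsplit : ∑ x with 2 * x.val < p, x⁻¹
      = ∑ x with 2 * x.val < p ∧ 2 * (a * x).val < p, x⁻¹
        + ∑ x with 2 * x.val < p ∧ ¬ 2 * (a * x).val < p, x⁻¹ := by
    rw [← sum_filter_add_sum_filter_not _ (fun x => 2 * (a * x).val < p), filter_filter,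
      filter_filter]
  have hmul : ∑ x with 2 * (a * x).val < p, x⁻¹ = a * ∑ x with 2 * x.val < p, x⁻¹ := by
    rw [mul_sum]
    exact sum_equiv (Equiv.mulLeft₀ a ha) (by simp) fun x _ => by
      rw [Equiv.mulLeft₀_apply, mul_inv, mul_inv_cancel_left₀ ha]
  have hneg : ∑ x with ¬ 2 * x.val < p ∧ 2 * (a * x).val < p, x⁻¹
      = -∑ x with 2 * x.val < p ∧ ¬ 2 * (a * x).val < p, x⁻¹ := by
    rw [← sum_neg_distrib]
    refine sum_equiv (Equiv.neg _) (fun x => ?_) fun x _ => by simp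
    rcases eq_or_ne x 0 with rfl | hx
    · simp [and_comm]
    · simp only [mem_filter, mem_univ, true_and, Equiv.neg_apply, mul_neg,
        two_mul_val_neg_lt_iff hodd hx, two_mul_val_neg_lt_iff hodd (mul_ne_zero ha hx)]
      tauto
  linear_combination hmul - hsplit_mul - hneg - hsplit

theorem two_mul_sum_Ioo_filter_mul_mod_inv (hodd : Odd p) {N : ℕ} (hN : ¬ p ∣ N) :
    2 * ∑ k ∈ Ioo 0 p with 2 * k < p ∧ 2 * (N * k % p) < p, (k : ZMod p)⁻¹
      = (N + 1) * ∑ k ∈ Ioo 0 p with 2 * k < p, (k : ZMod p)⁻¹ := by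
  have hval {k : ℕ} (hk : k ∈ Ioo 0 p) : (k : ZMod p).val = k := val_cast_of_lt (mem_Ioo.1 hk).2
  have hS : {k ∈ Ioo 0 p | 2 * k < p ∧ 2 * (N * k % p) < p}
      = {k ∈ Ioo 0 p | 2 * ((k : ℕ) : ZMod p).val < p ∧ 2 * ((N : ZMod p) * (k : ℕ)).val < p} :=
    filter_congr fun k hk => by rw [hval hk, ← Nat.cast_mul, val_natCast]
  have hH : {k ∈ Ioo 0 p | 2 * k < p} = {k ∈ Ioo 0 p | 2 * ((k : ℕ) : ZMod p).val < p} :=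
    filter_congr fun k hk => by rw [hval hk]
  have := two_mul_sum_filter_val_mul_inv hodd ((natCast_eq_zero_iff N p).not.2 hN)
  rwa [← sum_Ioo_filter_natCast_inv, ← sum_Ioo_filter_natCast_inv, ← hS, ← hH] at this

end ZMod

namespace Nat.Prime

variable {p : ℕ}

theorem cast_choose_sub_one (hp : p.Prime) {k : ℕ} (hk : k < p) :
    ((p - 1).choose k : ZMod p) = (-1) ^ k := by
  induction k with
  | zero => simp
  | succ k ih =>
    have hpascal : (p - 1).choose k + (p - 1).choose (k + 1) = p.choose (k + 1) := by
      conv_rhs => rw [← Nat.sub_add_cancel hp.one_le]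
      exact (Nat.choose_succ_succ' _ _).symm
    have hdvd : (p.choose (k + 1) : ZMod p) = 0 :=
      (ZMod.natCast_eq_zero_iff _ _).2 (hp.dvd_choose_self k.succ_ne_zero hk)
    rw [← hpascal, Nat.cast_add, ih (by omega)] at hdvd
    rw [pow_succ]
    linear_combination hdvd

theorem cast_choose_div_self (hp : p.Prime) {k : ℕ} (hk : k ∈ Ioo 0 p) :
    ((p.choose k / p : ℕ) : ZMod p) = (-1) ^ (k - 1) * (k : ZMod p)⁻¹ := by
  have := Fact.mk hp
  obtain ⟨hk0, hkp⟩ := mem_Ioo.1 hk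
  have hk : (k : ZMod p) ≠ 0 :=
    (ZMod.natCast_eq_zero_iff k p).not.2 (Nat.not_dvd_of_pos_of_lt hk0 hkp)
  have hid : p.choose k / p * k = (p - 1).choose (k - 1) := by
    have := Nat.add_one_mul_choose_eq (p - 1) (k - 1)
    rw [Nat.sub_add_cancel hp.one_le, Nat.sub_add_cancel hk0] at this
    rw [Nat.div_mul_right_comm (hp.dvd_choose_self hk0.ne' hkp), ← this,
      Nat.mul_div_cancel_left _ hp.pos]
  rw [eq_mul_inv_iff_mul_eq₀ hk, ← hp.cast_choose_sub_one (by omega : k - 1 < p), ← hid,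
    Nat.cast_mul]

theorem two_mul_fermatQuotient_two (hp : p.Prime) (hodd : Odd p) :
    2 * (fermatQuotient p 2 : ZMod p) = ∑ k ∈ Ioo 0 p, (-1) ^ (k - 1) * (k : ZMod p)⁻¹ := by
  have := Fact.mk hp
  have hfermat : p ∣ 2 ^ (p - 1) - 1 := by
    rw [← ZMod.natCast_eq_zero_iff, Nat.cast_sub Nat.one_le_two_pow, Nat.cast_pow, Nat.cast_ofNat,
      ZMod.pow_card_sub_one_eq_one (ZMod.two_ne_zero_of_odd hodd), Nat.cast_one, sub_self]
  have hbinom : ∑ k ∈ Ioo 0 p, p.choose k = p * (2 * fermatQuotient p 2) := by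
    have hsum := Nat.sum_range_choose p
    rw [sum_range_succ, sum_range_eq_add_Ico _ hp.pos, Nat.choose_zero_right,
      Nat.choose_self] at hsum
    have h2p : 2 * 2 ^ (p - 1) = 2 ^ p := mul_pow_sub_one hp.ne_zero 2
    have := Nat.one_le_two_pow (n := p - 1)
    rw [← Ico_add_one_left_eq_Ioo, zero_add, fermatQuotient, mul_left_comm,
      Nat.mul_div_cancel' hfermat]
    omega
  have hsum : ∑ k ∈ Ioo 0 p, p.choose k / p = 2 * fermatQuotient p 2 := by
    refine Nat.eq_of_mul_eq_mul_left hp.pos ?_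
    rw [mul_sum, ← hbinom]
    exact sum_congr rfl fun k hk =>
      Nat.mul_div_cancel' (hp.dvd_choose_self (mem_Ioo.1 hk).1.ne' (mem_Ioo.1 hk).2)
  rw [← Nat.cast_ofNat, ← Nat.cast_mul, ← hsum, Nat.cast_sum]
  exact sum_congr rfl fun k hk => hp.cast_choose_div_self hk

end Nat.Prime

namespace ZMod

variable {p : ℕ} [Fact p.Prime]

theorem sum_Ioo_filter_even_inv :
    ∑ k ∈ Ioo 0 p with Even k, (k : ZMod p)⁻¹
      = 2⁻¹ * ∑ k ∈ Ioo 0 p with 2 * k < p, (k : ZMod p)⁻¹ := by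
  rw [mul_sum]
  refine sum_nbij' (· / 2) (2 * ·) (fun k hk => ?_) (fun k hk => ?_) (fun k hk => ?_)
    (fun k _ => by omega) (fun k hk => ?_) <;>
    simp only [mem_filter, mem_Ioo, Nat.even_iff] at hk ⊢
  · omega
  · omega
  · omega
  · rw [← mul_inv, ← Nat.cast_ofNat, ← Nat.cast_mul,
      Nat.mul_div_cancel' (Nat.dvd_of_mod_eq_zero hk.2)]

theorem sum_Ioo_filter_two_mul_lt_inv_eq_fermatQuotient (hodd : Odd p) :
    ∑ k ∈ Ioo 0 p with 2 * k < p, (k : ZMod p)⁻¹ = -2 * (fermatQuotient p 2 : ZMod p) := by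
  have hsign : ∑ k ∈ Ioo 0 p, (-1) ^ (k - 1) * (k : ZMod p)⁻¹
      = ∑ k ∈ Ioo 0 p with ¬ Even k, (k : ZMod p)⁻¹
        - ∑ k ∈ Ioo 0 p with Even k, (k : ZMod p)⁻¹ := by
    rw [sum_filter, sum_filter, ← sum_sub_distrib]
    refine sum_congr rfl fun k hk => ?_
    have hk1 : 1 ≤ k := (mem_Ioo.1 hk).1
    by_cases h : Even k
    · simp [h, (Nat.Even.sub_odd hk1 h odd_one).neg_one_pow]
    · simp [h, (Nat.Odd.sub_odd (Nat.not_even_iff_odd.1 h) odd_one).neg_one_pow]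
  have hall : ∑ k ∈ Ioo 0 p with Even k, (k : ZMod p)⁻¹
      + ∑ k ∈ Ioo 0 p with ¬ Even k, (k : ZMod p)⁻¹ = 0 := by
    rw [sum_filter_add_sum_filter_not, sum_Ioo_natCast (·⁻¹) (by simp)]
    exact FiniteField.sum_inv_eq_zero (two_ne_zero_of_odd hodd)
  have hq := Nat.Prime.two_mul_fermatQuotient_two Fact.out hodd
  have h2 : (2 : ZMod p) * 2⁻¹ = 1 := mul_inv_cancel₀ (two_ne_zero_of_odd hodd)
  rw [hsign] at hq
  linear_combination hq + hall - 2 * sum_Ioo_filter_even_inv (p := p)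
    - (∑ k ∈ Ioo 0 p with 2 * k < p, (k : ZMod p)⁻¹) * h2

end ZMod

theorem sum_Ioo_filter_dvd_add_inv {p N j : ℕ} (hp : p.Prime) (hN : ¬ p ∣ N) (hj : 2 * j < N) :
    ∑ m ∈ Ioo 0 p with 2 * N ∣ m + 2 * j * p, (m : ZMod p)⁻¹
      = ∑ k ∈ Ioo 0 p with (2 * k < p ∧ 2 * (N * k % p) < p) ∧ N * k / p = j,
          ((2 * N * k : ℕ) : ZMod p)⁻¹ := by
  have hN0 : 0 < N := by omega
  have hdiv_mul {m : ℕ} (hdvd : 2 * N ∣ m + 2 * j * p) :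
      2 * N * ((m + 2 * j * p) / (2 * N)) = m + 2 * j * p :=
    Nat.mul_div_cancel' hdvd
  have hmod {k : ℕ} (hk : k ∈ Ioo 0 p) (hkj : N * k / p = j) :
      0 < N * k % p ∧ 2 * (N * k % p) + 2 * j * p = 2 * N * k := by
    have := Nat.div_add_mod (N * k) p
    have hnd : ¬ p ∣ N * k := hp.dvd_mul.not.2
      (not_or.2 ⟨hN, Nat.not_dvd_of_pos_of_lt (mem_Ioo.1 hk).1 (mem_Ioo.1 hk).2⟩)
    refine ⟨Nat.pos_of_ne_zero fun h => hnd (Nat.dvd_of_mod_eq_zero h), ?_⟩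
    subst hkj
    linarith
  refine sum_nbij' (fun m => (m + 2 * j * p) / (2 * N)) (fun k => 2 * (N * k % p))
    (fun m hm => ?_) (fun k hk => ?_) (fun m hm => ?_) (fun k hk => ?_) (fun m hm => ?_)
  · obtain ⟨hmIoo, hdvd⟩ := mem_filter.1 hm
    obtain ⟨hm0, hmp⟩ := mem_Ioo.1 hmIoo
    have hkm := hdiv_mul hdvd
    set k := (m + 2 * j * p) / (2 * N)
    obtain ⟨hq, hr⟩ := Nat.mul_div_eq_and_two_mul_mul_mod_eq hmp hkm
    have hk0 : k ≠ 0 := fun h0 => by rw [h0, mul_zero] at hkm; omega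
    have hsmall : 2 * (N * k % p) < p := hr ▸ hmp
    have h2k := (Nat.two_mul_lt_iff_two_mul_div_lt hN0 hsmall).2 (hq ▸ hj)
    exact mem_filter.2 ⟨mem_Ioo.2 ⟨Nat.pos_of_ne_zero hk0, by omega⟩, ⟨h2k, hsmall⟩, hq⟩
  · obtain ⟨hkp, ⟨-, hsmall⟩, hkj⟩ := mem_filter.1 hk
    obtain ⟨hr, he⟩ := hmod hkp hkj
    exact mem_filter.2 ⟨mem_Ioo.2 ⟨by omega, hsmall⟩, he ▸ dvd_mul_right _ _⟩
  · obtain ⟨hmp, hdvd⟩ := mem_filter.1 hm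
    exact (Nat.mul_div_eq_and_two_mul_mul_mod_eq (mem_Ioo.1 hmp).2 (hdiv_mul hdvd)).2
  · obtain ⟨hkp, -, hkj⟩ := mem_filter.1 hk
    rw [(hmod hkp hkj).2, Nat.mul_div_cancel_left k (by omega)]
  · rw [hdiv_mul (mem_filter.1 hm).2]
    simp

theorem sum_Ioo_filter_level_two_mul_inv {p N : ℕ} (hp : p.Prime) (hN : ¬ p ∣ N) :
    ∑ j ∈ (range N).filter (fun j => 2 * j < N),
      ∑ m ∈ (Ioo 0 p).filter
        (fun m : ℕ => (m : ZMod (2 * N)) = -(((2 * j : ℕ) : ZMod (2 * N)) * (p : ZMod (2 * N)))),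
        (m : ZMod p)⁻¹
      = ((2 * N : ℕ) : ZMod p)⁻¹
        * ∑ k ∈ Ioo 0 p with 2 * k < p ∧ 2 * (N * k % p) < p, (k : ZMod p)⁻¹ := by
  have := Fact.mk hp
  have hN0 : 0 < N := Nat.pos_of_ne_zero <| by rintro rfl; exact hN (dvd_zero p)
  have hmaps : ∀ k ∈ {k ∈ Ioo 0 p | 2 * k < p ∧ 2 * (N * k % p) < p},
      N * k / p ∈ {j ∈ range N | 2 * j < N} := by
    intro k hk
    simp only [mem_filter, mem_range] at hk ⊢
    have := (Nat.two_mul_lt_iff_two_mul_div_lt hN0 hk.2.2).1 hk.2.1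
    omega
  rw [mul_sum, ← sum_fiberwise_of_maps_to hmaps]
  refine sum_congr rfl fun j hj => ?_
  have hcond : (Ioo 0 p).filter (fun m : ℕ =>
        (m : ZMod (2 * N)) = -(((2 * j : ℕ) : ZMod (2 * N)) * (p : ZMod (2 * N))))
      = {m ∈ Ioo 0 p | 2 * N ∣ m + 2 * j * p} := filter_congr fun m _ => by
    rw [← Nat.cast_mul, eq_neg_iff_add_eq_zero, ← Nat.cast_add, ZMod.natCast_eq_zero_iff]
  rw [hcond, sum_Ioo_filter_dvd_add_inv hp hN (mem_filter.1 hj).2, filter_filter]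
  exact sum_congr rfl fun k _ => by rw [Nat.cast_mul _ k, mul_inv]

theorem log_two_as_level_2N_general (N p : ℕ) (hp : p.Prime) (hodd : Odd p)
    (hpN : ¬ p ∣ 2 * N) :
    ((N : ZMod p) + 1) * (((2 ^ (p - 1) - 1) / p : ℕ) : ZMod p)
    = -(((2 * N : ℕ) : ZMod p)) *
        ∑ j ∈ (Finset.range N).filter (fun j => 2 * j < N),
          ∑ m ∈ (Finset.Ioo 0 p).filter
            (fun m : ℕ => ((m : ZMod (2 * N)) =
              -(((2 * j : ℕ) : ZMod (2 * N)) * (p : ZMod (2 * N))))),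
          ((m : ZMod p))⁻¹ := by
  have := Fact.mk hp
  have hN : ¬ p ∣ N := fun h => hpN (dvd_mul_of_dvd_right h 2)
  have h2N : ((2 * N : ℕ) : ZMod p) ≠ 0 := (ZMod.natCast_eq_zero_iff _ _).not.2 hpN
  have hS := ZMod.two_mul_sum_Ioo_filter_mul_mod_inv hodd hN
  rw [ZMod.sum_Ioo_filter_two_mul_lt_inv_eq_fermatQuotient hodd, fermatQuotient] at hS
  rw [sum_Ioo_filter_level_two_mul_inv hp hN, neg_mul, ← mul_assoc, mul_inv_cancel₀ h2N, one_mul]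
  apply mul_left_cancel₀ (ZMod.two_ne_zero_of_odd hodd)
  linear_combination hS

/-- **Equation (4.1), prime-by-prime (multiplied through by `N+1`).** For an odd prime `p` not
dividing `2N`, one has
`(N+1)·q_p(2) = -2N · Σ_{0 ≤ j < N/2} ζ^{[2j]}_{p,2N}(1)` in `ZMod p`, where
`q_p(2) = (2^{p-1}-1)/p` and `ζ^{[2j]}_{p,2N}(1) = Σ_{0<m<p, m ≡ -2jp (mod 2N)} 1/m`. -/
theorem log_two_as_level_2N (N p : ℕ) (hN : 0 < N) (hp : p.Prime) (hodd : Odd p)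
    (hpN : ¬ p ∣ 2 * N) :
    ((N : ZMod p) + 1) * (((2 ^ (p - 1) - 1) / p : ℕ) : ZMod p)
    = -(((2 * N : ℕ) : ZMod p)) *
        ∑ j ∈ (Finset.range N).filter (fun j => 2 * j < N),
          ∑ m ∈ (Finset.Ioo 0 p).filter
            (fun m : ℕ => ((m : ZMod (2 * N)) =
              -(((2 * j : ℕ) : ZMod (2 * N)) * (p : ZMod (2 * N))))),
          ((m : ZMod p))⁻¹ :=
  log_two_as_level_2N_general N p hp hodd hpN
end
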